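/- Let K ≥ 1, let π : Fin K → ℝ be nonnegative routing scores sorted in non-increasing order (π₀ ≥ π₁ ≥ … ≥ π_{K−1} ≥ 0), and let p ≤ Σ_{i < K} πᵢ be a real threshold. Let m be the least natural number such that the partial sum of the first m scores satisfies Σ_{i < m} πᵢ ≥ p. Then the set of the first m indices is feasible (its scores sum to at least p), and every subset S ⊆ Fin K with Σ_{i ∈ S} πᵢ ≥ p has cardinality |S| ≥ m. Hence the greedy strategy of selecting experts in order of decreasing score until the cumulative sum reaches p solves the optimization problem min_{S} |S| subject to Σ_{i ∈ S} πᵢ ≥ p. -/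
import Mathlib

lemma fin_strictMono_le {n K : ℕ} (f : Fin n → Fin K) (hf : StrictMono f) :
    ∀ k : Fin n, (k : ℕ) ≤ (f k : ℕ) := by
  have key : ∀ j : ℕ, ∀ k : Fin n, (k : ℕ) = j → j ≤ (f k : ℕ) := by
    intro j
    induction j with
    | zero => intro k _; exact Nat.zero_le _
    | succ j ih =>
        intro k hk
        have hj : j < n := by omega
        have hlt : (⟨j, hj⟩ : Fin n) < k := by
          simp [Fin.lt_def, hk]
        have h1 : j ≤ (f ⟨j, hj⟩ : ℕ) := ih ⟨j, hj⟩ rfl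
        have h2 : (f ⟨j, hj⟩ : ℕ) < (f k : ℕ) := hf hlt
        omega
  exact fun k => key (k : ℕ) k rfl

/-- greedy top-`p` routing is optimal.  If `m` is the least
number of (sorted) experts whose cumulative score reaches the threshold `p`,
then the first `m` experts are feasible and every feasible subset has
cardinality at least `m`. -/
theorem d2moe_greedy_top_p_optimal
    (K : ℕ) (hK : 1 ≤ K) (π : Fin K → ℝ)
    (hπ0 : ∀ i, 0 ≤ π i)
    (hsorted : ∀ i j : Fin K, i ≤ j → π j ≤ π i)
    (p : ℝ) (hp : p ≤ ∑ i, π i) (m : ℕ)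
    (hm : IsLeast
      {n : ℕ | p ≤ ∑ i ∈ Finset.univ.filter (fun i : Fin K => (i : ℕ) < n), π i}
      m) :
    (p ≤ ∑ i ∈ Finset.univ.filter (fun i : Fin K => (i : ℕ) < m), π i) ∧
    ∀ S : Finset (Fin K), p ≤ ∑ i ∈ S, π i → m ≤ S.card := by
  refine ⟨hm.1, fun S hS => ?_⟩
  set n := S.card with hn
  by_cases hnK : K ≤ n
  · have hKmem : p ≤ ∑ i ∈ Finset.univ.filter (fun i : Fin K => (i : ℕ) < K), π i := by
      have heq : (Finset.univ.filter (fun i : Fin K => (i : ℕ) < K)) = Finset.univ := by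
        apply Finset.filter_true_of_mem; intro i _; exact i.2
      rw [heq]; exact hp
    exact le_trans (hm.2 hKmem) hnK
  · push_neg at hnK
    have hn' : n ≤ K := le_of_lt hnK
    apply hm.2
    set f : Fin n → Fin K := fun k => S.orderEmbOfFin rfl k with hf
    have hmem : ∀ k, f k ∈ S := fun k => S.orderEmbOfFin_mem rfl k
    have hsm : StrictMono f := (S.orderEmbOfFin rfl).strictMono
    have hinj : Function.Injective f := hsm.injective
    have hle : ∀ k : Fin n, (k : ℕ) ≤ (f k : ℕ) := fin_strictMono_le f hsm
    have himg : Finset.image f Finset.univ = S := by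
      apply Finset.eq_of_subset_of_card_le
      · intro x hx
        simp only [Finset.mem_image] at hx
        obtain ⟨k, _, rfl⟩ := hx
        exact hmem k
      · rw [Finset.card_image_of_injective _ hinj]
        simp [hn]
    have h1 : ∑ i ∈ S, π i = ∑ k : Fin n, π (f k) := by
      rw [← himg, Finset.sum_image (fun a _ b _ h => hinj h)]
    set g : Fin n → Fin K := fun k => ⟨k, lt_of_lt_of_le k.2 hn'⟩ with hg
    have hginj : Function.Injective g := by
      intro a b h
      exact Fin.ext (by simpa [hg] using congrArg Fin.val h)
    have h2 : ∑ k : Fin n, π (f k) ≤ ∑ k : Fin n, π (g k) := by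
      apply Finset.sum_le_sum
      intro k _
      exact hsorted (g k) (f k) (hle k)
    have hgimg : Finset.image g Finset.univ
        = Finset.univ.filter (fun i : Fin K => (i : ℕ) < n) := by
      ext x
      simp only [Finset.mem_image, Finset.mem_filter, Finset.mem_univ, true_and]
      constructor
      · rintro ⟨k, _, rfl⟩; exact k.2
      · intro hx; exact ⟨⟨x, hx⟩, by apply Fin.ext; rfl⟩
    have h3 : ∑ k : Fin n, π (g k)
        = ∑ i ∈ Finset.univ.filter (fun i : Fin K => (i : ℕ) < n), π i := by
      rw [← hgimg, Finset.sum_image (fun a _ b _ h => hginj h)]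
    calc p ≤ ∑ i ∈ S, π i := hS
      _ = _ := h1
      _ ≤ _ := h2
      _ = _ := h3
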